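/- arXiv:1707.06489 — 3 statements merged into one kernel-verified Lean document; each statement's English description precedes it below -/
import Mathlib

section
/- If Q : E² × B(E²) → [0,1] is a substochastic kernel satisfying Q(x,y,A×E) ≤ P(x,A) and Q(x,y,E×A) ≤ P(y,A) for all x,y ∈ E and A ∈ B(E), then defining R(x,y,A×B) = (1 - Q(x,y,E²))⁻¹ [P(x,A) - Q(x,y,A×E)][P(y,B) - Q(x,y,E×B)] when Q(x,y,E²) < 1 and R = 0 otherwise, the kernel B := Q + R is a stochastic kernel on E² whose marginals are P, i.e., B(x,y,A×E) = P(x,A) and B(x,y,E×A) = P(y,A) for all x,y,A. -/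
open MeasureTheory

theorem stmt0 {E : Type*} [MeasurableSpace E]
    (P : E → Measure E) (hP : ∀ x, IsProbabilityMeasure (P x))
    (Q : E → E → Measure (E × E))
    (hQm : ∀ x y, Q x y Set.univ ≤ 1)
    (hQ1 : ∀ x y (A : Set E), MeasurableSet A → Q x y (A ×ˢ Set.univ) ≤ P x A)
    (hQ2 : ∀ x y (A : Set E), MeasurableSet A → Q x y (Set.univ ×ˢ A) ≤ P y A)
    (R : E → E → Measure (E × E))
    (hR : ∀ x y, R x y = if Q x y Set.univ < 1 then
        (1 - Q x y Set.univ)⁻¹ •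
          (((P x) - (Q x y).map Prod.fst).prod ((P y) - (Q x y).map Prod.snd))
      else 0)
    (B : E → E → Measure (E × E)) (hB : ∀ x y, B x y = Q x y + R x y) :
    ∀ x y, IsProbabilityMeasure (B x y) ∧
      ∀ A : Set E, MeasurableSet A →
        B x y (A ×ˢ Set.univ) = P x A ∧ B x y (Set.univ ×ˢ A) = P y A := by
  intro x y
  haveI := hP x; haveI := hP y
  set μ := Q x y with hμ
  set q := μ Set.univ with hq
  have hq1 : q ≤ 1 := hQm x y
  -- map facts
  haveI hμfin : IsFiniteMeasure μ := ⟨lt_of_le_of_lt hq1 (by norm_num)⟩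
  have hmapf : ∀ A : Set E, MeasurableSet A → μ.map Prod.fst A = μ (A ×ˢ Set.univ) := by
    intro A hA
    rw [Measure.map_apply measurable_fst hA, Set.prod_univ]
  have hmaps : ∀ A : Set E, MeasurableSet A → μ.map Prod.snd A = μ (Set.univ ×ˢ A) := by
    intro A hA
    rw [Measure.map_apply measurable_snd hA, Set.univ_prod]
  have hle1 : μ.map Prod.fst ≤ P x := by
    rw [Measure.le_iff]; intro s hs; rw [hmapf s hs]; exact hQ1 x y s hs
  have hle2 : μ.map Prod.snd ≤ P y := by
    rw [Measure.le_iff]; intro s hs; rw [hmaps s hs]; exact hQ2 x y s hs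
  haveI : IsFiniteMeasure (μ.map Prod.fst) := isFiniteMeasure_of_le _ hle1
  haveI : IsFiniteMeasure (μ.map Prod.snd) := isFiniteMeasure_of_le _ hle2
  set ν1 := P x - μ.map Prod.fst with hν1
  set ν2 := P y - μ.map Prod.snd with hν2
  haveI : IsFiniteMeasure ν1 := isFiniteMeasure_of_le _ Measure.sub_le
  haveI : IsFiniteMeasure ν2 := isFiniteMeasure_of_le _ Measure.sub_le
  have hν1a : ∀ A : Set E, MeasurableSet A → ν1 A = P x A - μ (A ×ˢ Set.univ) := by
    intro A hA; rw [hν1, Measure.sub_apply hA hle1, hmapf A hA]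
  have hν2a : ∀ A : Set E, MeasurableSet A → ν2 A = P y A - μ (Set.univ ×ˢ A) := by
    intro A hA; rw [hν2, Measure.sub_apply hA hle2, hmaps A hA]
  have hu : (Set.univ : Set (E × E)) = Set.univ ×ˢ Set.univ := Set.univ_prod_univ.symm
  have hν1u : ν1 Set.univ = 1 - q := by
    rw [hν1a Set.univ MeasurableSet.univ, measure_univ, ← hu]
  have hν2u : ν2 Set.univ = 1 - q := by
    rw [hν2a Set.univ MeasurableSet.univ, measure_univ, ← hu]
  have key : ∀ A : Set E, MeasurableSet A →
      B x y (A ×ˢ Set.univ) = P x A ∧ B x y (Set.univ ×ˢ A) = P y A := by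
    intro A hA
    rw [hB, Measure.add_apply, Measure.add_apply, hR]
    by_cases hlt : q < 1
    · rw [if_pos hlt]
      have h0 : (1 : ENNReal) - q ≠ 0 := by
        simpa [tsub_eq_zero_iff_le] using not_le.mpr hlt
      have htop : (1 : ENNReal) - q ≠ ⊤ := by
        exact ne_top_of_le_ne_top (by norm_num) (tsub_le_self.trans le_rfl)
      have cancel : ∀ c : ENNReal, (1 - q)⁻¹ * (c * (1 - q)) = c := by
        intro c
        rw [mul_comm c, ← mul_assoc, ENNReal.inv_mul_cancel h0 htop, one_mul]
      constructor
      · rw [Measure.smul_apply, Measure.prod_prod, smul_eq_mul, hν1a A hA, hν2u,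
          cancel, add_tsub_cancel_of_le (hQ1 x y A hA)]
      · rw [Measure.smul_apply, Measure.prod_prod, smul_eq_mul, hν1u, hν2a A hA,
          mul_comm (1 - q), cancel, add_tsub_cancel_of_le (hQ2 x y A hA)]
    · rw [if_neg hlt]
      simp only [Measure.coe_zero, Pi.zero_apply, add_zero]
      have hq' : q = 1 := le_antisymm hq1 (not_lt.mp hlt)
      have psum : ∀ (ρ : Measure E), IsProbabilityMeasure ρ → ρ A + ρ Aᶜ = 1 := by
        intro ρ hρ
        rw [measure_add_measure_compl hA, measure_univ]
      have marg : ∀ (T : Set (E × E)) (ρ : Measure E), IsProbabilityMeasure ρ →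
          T = Set.univ ×ˢ A ∨ True → μ T ≤ ρ A → μ Tᶜ ≤ ρ Aᶜ → μ T + μ Tᶜ = 1 → μ T = ρ A := by
        intro T ρ hρ _ h1 h2 hsum
        refine le_antisymm h1 ?_
        have e1 : μ T = 1 - μ Tᶜ := ENNReal.eq_sub_of_add_eq (measure_ne_top μ _) hsum
        have e2 : ρ A = 1 - ρ Aᶜ := ENNReal.eq_sub_of_add_eq (measure_ne_top ρ _) (psum ρ hρ)
        rw [e1, e2]
        exact tsub_le_tsub_left h2 1
      constructor
      · have hc : (A ×ˢ (Set.univ : Set E))ᶜ = Aᶜ ×ˢ Set.univ := by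
          rw [Set.prod_univ, Set.prod_univ, Set.preimage_compl]
        refine marg _ (P x) (hP x) (Or.inr trivial) (hQ1 x y A hA) ?_ ?_
        · rw [hc]; exact hQ1 x y Aᶜ hA.compl
        · rw [measure_add_measure_compl, ← hq, hq']
          exact (hA.prod MeasurableSet.univ)
      · have hc : ((Set.univ : Set E) ×ˢ A)ᶜ = Set.univ ×ˢ Aᶜ := by
          rw [Set.univ_prod, Set.univ_prod, Set.preimage_compl]
        refine marg _ (P y) (hP y) (Or.inr trivial) (hQ2 x y A hA) ?_ ?_
        · rw [hc]; exact hQ2 x y Aᶜ hA.compl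
        · rw [measure_add_measure_compl, ← hq, hq']
          exact (MeasurableSet.univ.prod hA)
  refine ⟨⟨?_⟩, key⟩
  have := (key Set.univ MeasurableSet.univ).1
  rw [hu, this]
  exact measure_univ
end

section
/- Let S : ℝ₊ × Y → Y satisfy ‖S(t,y₁) − S(t,y₂)‖ ≤ Le^{αt}‖y₁ − y₂‖ for constants L > 0 and α < λ, and let f : Y × I → ℝ be bounded and L_f-Lipschitz with respect to the metric ρ_c((y,i),(z,l)) = ‖y−z‖ + cδ_{il}. Define Gf(y,i) = ∫₀^∞ λe^{−λt} f(S_i(t,y), i) dt where each S_i satisfies the above bound and additionally ‖S_i(t,y) − S_l(t,z)‖ ≤ Le^{αt}‖y−z‖ + tL̄·δ_{il} with L̄ ≤ cL. Then Gf is Lipschitz with constant λL_f(L/(λ−α) + L/λ² + 1/λ) with respect to ρ_c. -/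
open MeasureTheory Set

lemma aux_int_exp {r : ℝ} (hr : 0 < r) :
    ∫ t in Ioi (0:ℝ), Real.exp (-(r*t)) = 1/r := by
  have h := Real.integral_rpow_mul_exp_neg_mul_Ioi (a := 1) one_pos hr
  simpa [Real.Gamma_one] using h

lemma aux_int_texp {r : ℝ} (hr : 0 < r) :
    ∫ t in Ioi (0:ℝ), t * Real.exp (-(r*t)) = 1/r^2 := by
  have h := Real.integral_rpow_mul_exp_neg_mul_Ioi (a := 2) two_pos hr
  have h2 : Real.Gamma 2 = 1 := by
    rw [show (2:ℝ) = 1 + 1 by norm_num, Real.Gamma_add_one one_ne_zero, Real.Gamma_one]; ring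
  rw [h2] at h
  norm_num at h
  rw [h, one_div]

lemma aux_intOn_texp {r : ℝ} (hr : 0 < r) :
    IntegrableOn (fun t : ℝ => t * Real.exp (-(r*t))) (Ioi 0) := by
  have h := integrableOn_rpow_mul_exp_neg_mul_rpow (s := 1) (p := 1) (b := r)
    (by norm_num) one_pos hr
  simpa [Real.rpow_one, neg_mul] using h

theorem stmt10 {H : Type*} [NormedAddCommGroup H]
    (N : ℕ) (S : Fin N → ℝ → H → H)
    (lam α L Lw c Lf Lbar : ℝ)
    (hlam : 0 < lam) (hα : α < lam) (hL : 0 < L) (hc : 0 < c)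
    (hLbar : 0 ≤ Lbar) (hLbarc : Lbar ≤ c * L) (hLf : 0 ≤ Lf)
    (hScont : ∀ i, Continuous fun p : ℝ × H => S i p.1 p.2)
    (f : H × Fin N → ℝ) (hfcont : Continuous f)
    (Cf : ℝ) (hfb : ∀ x, |f x| ≤ Cf)
    (hfLip : ∀ (y z : H) (i l : Fin N),
      |f (y, i) - f (z, l)| ≤ Lf * (‖y - z‖ + c * (if i = l then 0 else 1)))
    (hflow : ∀ (i l : Fin N), ∀ t ≥ (0:ℝ), ∀ (y z : H),
      ‖S i t y - S l t z‖ ≤ L * Real.exp (α * t) * ‖y - z‖ +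
        t * Lbar * (if i = l then 0 else 1))
    (G : H × Fin N → ℝ)
    (hG : ∀ y i, G (y, i)
      = ∫ t in Set.Ioi (0:ℝ), lam * Real.exp (-lam * t) * f (S i t y, i)) :
    ∀ (y z : H) (i l : Fin N),
      |G (y, i) - G (z, l)| ≤
        lam * Lf * (L / (lam - α) + L / lam ^ 2 + 1 / lam) *
          (‖y - z‖ + c * (if i = l then 0 else 1)) := by
  intro y z i l
  have hla : 0 < lam - α := by linarith
  set D : ℝ := ‖y - z‖ with hD
  set δ : ℝ := (if i = l then 0 else 1) with hδ
  have hδ0 : 0 ≤ δ := by rw [hδ]; split <;> norm_num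
  have hD0 : 0 ≤ D := norm_nonneg _
  -- integrability of the integrands of G
  have hint : ∀ (j : Fin N) (w : H),
      IntegrableOn (fun t : ℝ => lam * Real.exp (-lam * t) * f (S j t w, j)) (Ioi 0) := by
    intro j w
    have hcont : Continuous fun t : ℝ => lam * Real.exp (-lam * t) * f (S j t w, j) := by
      refine Continuous.mul (continuous_const.mul (Real.continuous_exp.comp (by fun_prop))) ?_
      exact hfcont.comp (((hScont j).comp (continuous_id.prodMk continuous_const)).prodMk
        continuous_const)
    refine Integrable.mono' ((exp_neg_integrableOn_Ioi 0 hlam).const_mul (lam * Cf))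
      hcont.aestronglyMeasurable (Filter.Eventually.of_forall fun t => ?_)
    have he : 0 < Real.exp (-lam * t) := Real.exp_pos _
    rw [Real.norm_eq_abs, abs_mul, abs_mul, abs_of_pos hlam, abs_of_pos he]
    calc lam * Real.exp (-lam * t) * |f (S j t w, j)|
        ≤ lam * Real.exp (-lam * t) * Cf :=
          mul_le_mul_of_nonneg_left (hfb _) (by positivity)
      _ = lam * Cf * Real.exp (-lam * t) := by ring
  -- the bound function and its pieces
  have hb1 : IntegrableOn (fun t : ℝ => Real.exp (-((lam - α) * t))) (Ioi 0) := by
    simpa only [neg_mul] using exp_neg_integrableOn_Ioi 0 hla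
  have hb2 : IntegrableOn (fun t : ℝ => t * Real.exp (-(lam * t))) (Ioi 0) := aux_intOn_texp hlam
  have hb3 : IntegrableOn (fun t : ℝ => Real.exp (-(lam * t))) (Ioi 0) := by
    simpa only [neg_mul] using exp_neg_integrableOn_Ioi 0 hlam
  set bound : ℝ → ℝ := fun t =>
    (lam * Lf * L * D) * Real.exp (-((lam - α) * t)) +
      ((lam * Lf * Lbar * δ) * (t * Real.exp (-(lam * t))) +
        (lam * Lf * c * δ) * Real.exp (-(lam * t))) with hbound
  have hbint : IntegrableOn bound (Ioi 0) :=
    ((hb1.const_mul _).add ((hb2.const_mul _).add (hb3.const_mul _)))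
  -- rewrite the difference as a single integral
  have hdiff : G (y, i) - G (z, l) = ∫ t in Ioi (0:ℝ),
      (lam * Real.exp (-lam * t) * f (S i t y, i) -
        lam * Real.exp (-lam * t) * f (S l t z, l)) := by
    rw [hG, hG, ← integral_sub (hint i y) (hint l z)]
  -- pointwise bound
  have hpt : ∀ t ∈ Ioi (0:ℝ),
      ‖lam * Real.exp (-lam * t) * f (S i t y, i) -
        lam * Real.exp (-lam * t) * f (S l t z, l)‖ ≤ bound t := by
    intro t ht
    have ht0 : (0:ℝ) ≤ t := le_of_lt ht
    have he : 0 < Real.exp (-lam * t) := Real.exp_pos _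
    have h1 : |f (S i t y, i) - f (S l t z, l)| ≤
        Lf * (L * Real.exp (α * t) * D + t * Lbar * δ + c * δ) := by
      calc |f (S i t y, i) - f (S l t z, l)|
          ≤ Lf * (‖S i t y - S l t z‖ + c * δ) := hfLip _ _ _ _
        _ ≤ Lf * (L * Real.exp (α * t) * D + t * Lbar * δ + c * δ) := by
            have := hflow i l t ht0 y z
            have h2 : ‖S i t y - S l t z‖ + c * δ ≤
                L * Real.exp (α * t) * D + t * Lbar * δ + c * δ := by
              rw [hD, hδ]; linarith
            exact mul_le_mul_of_nonneg_left h2 hLf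
    have hexp : Real.exp (-lam * t) * Real.exp (α * t) = Real.exp (-((lam - α) * t)) := by
      rw [← Real.exp_add]; ring_nf
    calc ‖lam * Real.exp (-lam * t) * f (S i t y, i) -
          lam * Real.exp (-lam * t) * f (S l t z, l)‖
        = lam * Real.exp (-lam * t) * |f (S i t y, i) - f (S l t z, l)| := by
          rw [Real.norm_eq_abs, ← mul_sub, abs_mul, abs_of_pos (by positivity)]
      _ ≤ lam * Real.exp (-lam * t) *
          (Lf * (L * Real.exp (α * t) * D + t * Lbar * δ + c * δ)) := by
          exact mul_le_mul_of_nonneg_left h1 (by positivity)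
      _ = bound t := by rw [hbound]; simp only []; rw [← hexp]; ring
  have habs : |G (y, i) - G (z, l)| ≤ ∫ t in Ioi (0:ℝ), bound t := by
    rw [hdiff, ← Real.norm_eq_abs]
    exact norm_integral_le_of_norm_le hbint
      ((ae_restrict_iff' measurableSet_Ioi).2 (Filter.Eventually.of_forall hpt))
  -- compute the integral of the bound
  have hval : ∫ t in Ioi (0:ℝ), bound t =
      (lam * Lf * L * D) * (1/(lam - α)) + ((lam * Lf * Lbar * δ) * (1/lam^2) +
        (lam * Lf * c * δ) * (1/lam)) := by
    calc ∫ t in Ioi (0:ℝ), bound t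
        = (∫ t in Ioi (0:ℝ), (lam * Lf * L * D) * Real.exp (-((lam - α) * t))) +
            ∫ t in Ioi (0:ℝ), ((lam * Lf * Lbar * δ) * (t * Real.exp (-(lam * t))) +
              (lam * Lf * c * δ) * Real.exp (-(lam * t))) :=
          integral_add (hb1.const_mul _) ((hb2.const_mul _).add (hb3.const_mul _))
      _ = (∫ t in Ioi (0:ℝ), (lam * Lf * L * D) * Real.exp (-((lam - α) * t))) +
            ((∫ t in Ioi (0:ℝ), (lam * Lf * Lbar * δ) * (t * Real.exp (-(lam * t)))) +
              ∫ t in Ioi (0:ℝ), (lam * Lf * c * δ) * Real.exp (-(lam * t))) := by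
          rw [integral_add (hb2.const_mul _) (hb3.const_mul _)]
      _ = (lam * Lf * L * D) * (1/(lam - α)) + ((lam * Lf * Lbar * δ) * (1/lam^2) +
            (lam * Lf * c * δ) * (1/lam)) := by
          rw [integral_const_mul, integral_const_mul, integral_const_mul,
            aux_int_exp hla, aux_int_texp hlam, aux_int_exp hlam]
  rw [hval] at habs
  refine le_trans habs ?_
  have key : (lam * Lf * L * D) * (1/(lam - α)) + ((lam * Lf * Lbar * δ) * (1/lam^2) +
      (lam * Lf * c * δ) * (1/lam)) ≤
      lam * Lf * (L / (lam - α) + L / lam ^ 2 + 1 / lam) * (D + c * δ) := by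
    have hla' : lam - α ≠ 0 := ne_of_gt hla
    have hlam' : lam ≠ 0 := ne_of_gt hlam
    have expand : lam * Lf * (L / (lam - α) + L / lam ^ 2 + 1 / lam) * (D + c * δ) =
        (lam * Lf * L * D) * (1/(lam - α)) +
          ((lam * Lf * L * (c * δ)) * (1/(lam - α)) + (lam * Lf * L * D) * (1/lam^2) +
            (lam * Lf * L * (c * δ)) * (1/lam^2) + (lam * Lf * D) * (1/lam) +
            (lam * Lf * c * δ) * (1/lam)) := by
      field_simp
      ring
    rw [expand]
    have hinv1 : (0:ℝ) ≤ 1/(lam - α) := by positivity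
    have hinv2 : (0:ℝ) ≤ 1/lam^2 := by positivity
    have hinv3 : (0:ℝ) ≤ 1/lam := by positivity
    have hll : 0 ≤ lam * Lf := mul_nonneg hlam.le hLf
    have t1 : 0 ≤ (lam * Lf * L * (c * δ)) * (1/(lam - α)) :=
      mul_nonneg (mul_nonneg (mul_nonneg hll hL.le) (mul_nonneg hc.le hδ0)) hinv1
    have t2 : 0 ≤ (lam * Lf * L * D) * (1/lam^2) :=
      mul_nonneg (mul_nonneg (mul_nonneg hll hL.le) hD0) hinv2
    have t3 : 0 ≤ (lam * Lf * D) * (1/lam) := mul_nonneg (mul_nonneg hll hD0) hinv3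
    have t4 : (lam * Lf * Lbar * δ) * (1/lam^2) ≤ (lam * Lf * L * (c * δ)) * (1/lam^2) := by
      apply mul_le_mul_of_nonneg_right _ hinv2
      have h5 : Lbar * δ ≤ c * L * δ := mul_le_mul_of_nonneg_right hLbarc hδ0
      nlinarith [mul_le_mul_of_nonneg_left h5 hll]
    linarith
  exact key
end

section
/- Let α < 0 ≤ λ, L > 0, L_w > 0 with q := λLL_w/(λ−α) < 1. For any y₁, y₂ in a normed space, t ≥ 0 with e^{αt} ≤ λ/(λ−α), and any map w with ‖w(u)−w(v)‖ ≤ L_w‖u−v‖ on the relevant points, if ‖S₁(t,y₁)−S₂(t,y₂)‖ ≤ Le^{αt}‖y₁−y₂‖ + tL̄δ (δ ∈ {0,1}), and c satisfies cq ≥ L_w e^{T*}L̄ for t ≤ T*, then ‖w(S₁(t,y₁)) − w(S₂(t,y₂))‖ ≤ q(‖y₁−y₂‖ + cδ). -/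
theorem stmt14 {E : Type*} [NormedAddCommGroup E]
    (lam α L Lw Lbar c q Tstar t δ : ℝ)
    (y₁ y₂ s₁ s₂ : E) (w : E → E)
    (hα : α < 0) (hlam : 0 ≤ lam) (hL : 0 < L) (hLw : 0 < Lw) (hLbar : 0 ≤ Lbar)
    (hq : q = lam * L * Lw / (lam - α)) (hq1 : q < 1)
    (ht0 : 0 ≤ t) (htT : t ≤ Tstar)
    (hexp : Real.exp (α * t) ≤ lam / (lam - α))
    (hδ : δ = 0 ∨ δ = 1)
    (hflow : ‖s₁ - s₂‖ ≤ L * Real.exp (α * t) * ‖y₁ - y₂‖ + t * Lbar * δ)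
    (hw : ‖w s₁ - w s₂‖ ≤ Lw * ‖s₁ - s₂‖)
    (hc : Lw * Real.exp Tstar * Lbar ≤ c * q) :
    ‖w s₁ - w s₂‖ ≤ q * (‖y₁ - y₂‖ + c * δ) := by
  have hden : 0 < lam - α := by linarith
  have hqv : Lw * (L * (lam / (lam - α))) = q := by
    rw [hq]; field_simp
  have h1 : Lw * (L * Real.exp (α * t)) ≤ q := by
    rw [← hqv]
    gcongr
  have hn : (0:ℝ) ≤ ‖y₁ - y₂‖ := norm_nonneg _
  have hchain : ‖w s₁ - w s₂‖ ≤ Lw * (L * Real.exp (α * t) * ‖y₁ - y₂‖ + t * Lbar * δ) := by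
    calc ‖w s₁ - w s₂‖ ≤ Lw * ‖s₁ - s₂‖ := hw
      _ ≤ _ := by nlinarith
  have hTe : Tstar ≤ Real.exp Tstar := by
    have := Real.add_one_le_exp Tstar; linarith
  rcases hδ with h | h <;> subst h
  · nlinarith
  · have hte : t ≤ Real.exp Tstar := htT.trans hTe
    have h2 : Lw * (t * Lbar) ≤ c * q := by
      calc Lw * (t * Lbar) ≤ Lw * (Real.exp Tstar * Lbar) := by
            have := mul_le_mul_of_nonneg_right hte hLbar
            nlinarith
        _ = Lw * Real.exp Tstar * Lbar := by ring
        _ ≤ c * q := hc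
    nlinarith
end
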